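/- The submanifold field representation map is injective on SGRFs: if two single-Gaussian radiance fields with nonzero color satisfy ρ₁ = ρ₂ and c₁ = c₂, then their representations (M₁, F₁) and (M₂, F₂) are equal, and conversely if (M₁, F₁) = (M₂, F₂) with Fᵢ(x) = cᵢ((x-μᵢ)/‖x-μᵢ‖) on the common ellipsoid Mᵢ = {x : (x-μᵢ)ᵀΣᵢ⁻¹(x-μᵢ) = 1}, then ρ₁ = ρ₂ and c₁ = c₂ on the set of directions realized by M₁. -/

import Mathlib

/-!
The density `exp (-q/2)` determines the Mahalanobis form `q`, hence its unit level set.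
Conversely, a level set `{x | (x - μ)ᵀ A (x - μ) = 1}` with `A` positive definite determines
both `μ` and `A`: if `c = μ₁ - μ₂ ≠ 0`, the two points `μ₁ ± s c` of the first ellipsoid
are at `(1 ± s) c` from `μ₂`, which cannot both lie on the second one; once the centers agree,
every ray from the center meets both ellipsoids in the same point, so the quadratic forms
agree, and a symmetric matrix is determined by its quadratic form (polarization).
-/

open Matrix

/-- Mahalanobis quadratic form. -/
noncomputable def mahal (μ : Fin 3 → ℝ) (S : Matrix (Fin 3) (Fin 3) ℝ) (x : Fin 3 → ℝ) : ℝ :=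
  (x - μ) ⬝ᵥ (S⁻¹ *ᵥ (x - μ))

/-- Unnormalized Gaussian density. -/
noncomputable def gdens (μ : Fin 3 → ℝ) (S : Matrix (Fin 3) (Fin 3) ℝ)
    (x : Fin 3 → ℝ) : ℝ :=
  Real.exp (-(mahal μ S x) / 2)

/-- The iso-probability submanifold at level `1`. -/
noncomputable def isoSurf (μ : Fin 3 → ℝ) (S : Matrix (Fin 3) (Fin 3) ℝ) : Set (Fin 3 → ℝ) :=
  {x | mahal μ S x = 1}

/-- Euclidean normalization of `x - μ`. -/
noncomputable def dirFrom (μ x : Fin 3 → ℝ) : Fin 3 → ℝ :=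
  (Real.sqrt ((x - μ) ⬝ᵥ (x - μ)))⁻¹ • (x - μ)

/-- The submanifold field `F(x) = c((x-μ)/‖x-μ‖)`. -/
noncomputable def sfField (c : (Fin 3 → ℝ) → (Fin 3 → ℝ)) (μ x : Fin 3 → ℝ) :
    Fin 3 → ℝ :=
  c (dirFrom μ x)

section Ellipsoid

variable {n : Type*} [Fintype n]

def ellipsoid (μ : n → ℝ) (A : Matrix n n ℝ) : Set (n → ℝ) :=
  {x | (x - μ) ⬝ᵥ (A *ᵥ (x - μ)) = 1}

@[simp]
lemma mem_ellipsoid {μ x : n → ℝ} {A : Matrix n n ℝ} :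
    x ∈ ellipsoid μ A ↔ (x - μ) ⬝ᵥ (A *ᵥ (x - μ)) = 1 :=
  Iff.rfl

lemma smul_dotProduct_mulVec_smul (A : Matrix n n ℝ) (s : ℝ) (v : n → ℝ) :
    (s • v) ⬝ᵥ (A *ᵥ (s • v)) = s ^ 2 * (v ⬝ᵥ (A *ᵥ v)) := by
  simp only [mulVec_smul, dotProduct_smul, smul_dotProduct, smul_eq_mul]
  ring

lemma Matrix.IsSymm.dotProduct_mulVec_comm {A : Matrix n n ℝ} (hA : A.IsSymm) (u v : n → ℝ) :
    u ⬝ᵥ (A *ᵥ v) = v ⬝ᵥ (A *ᵥ u) := by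
  rw [dotProduct_mulVec, ← mulVec_transpose, hA.eq, dotProduct_comm]

lemma Matrix.IsSymm.add_dotProduct_mulVec_add {A : Matrix n n ℝ} (hA : A.IsSymm) (u v : n → ℝ) :
    (u + v) ⬝ᵥ (A *ᵥ (u + v)) =
      u ⬝ᵥ (A *ᵥ u) + 2 * (u ⬝ᵥ (A *ᵥ v)) + v ⬝ᵥ (A *ᵥ v) := by
  rw [mulVec_add, dotProduct_add, add_dotProduct, add_dotProduct, hA.dotProduct_mulVec_comm v u]
  ring

lemma Matrix.IsSymm.eq_zero_of_dotProduct_mulVec_self {B : Matrix n n ℝ} (hB : B.IsSymm)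
    (h : ∀ v, v ⬝ᵥ (B *ᵥ v) = 0) : B = 0 := by
  classical
  have hpolar : ∀ u v : n → ℝ, u ⬝ᵥ (B *ᵥ v) = 0 := fun u v => by
    have := hB.add_dotProduct_mulVec_add u v
    rw [h, h, h] at this
    linarith
  ext i j
  simpa [mulVec_single, single_dotProduct] using hpolar (Pi.single i 1) (Pi.single j 1)

lemma Matrix.IsSymm.eq_of_dotProduct_mulVec_self {A B : Matrix n n ℝ} (hA : A.IsSymm)
    (hB : B.IsSymm) (h : ∀ v, v ⬝ᵥ (A *ᵥ v) = v ⬝ᵥ (B *ᵥ v)) : A = B :=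
  sub_eq_zero.1 <| (hA.sub hB).eq_zero_of_dotProduct_mulVec_self fun v => by
    rw [sub_mulVec, dotProduct_sub, h, sub_self]

lemma Matrix.PosDef.exists_smul_dotProduct_mulVec_smul_eq_one {A : Matrix n n ℝ} (hA : A.PosDef) {v : n → ℝ}
    (hv : v ≠ 0) : ∃ s : ℝ, s ≠ 0 ∧ (s • v) ⬝ᵥ (A *ᵥ (s • v)) = 1 := by
  have hq : 0 < v ⬝ᵥ (A *ᵥ v) := hA.dotProduct_mulVec_pos hv
  refine ⟨(Real.sqrt (v ⬝ᵥ (A *ᵥ v)))⁻¹, by positivity, ?_⟩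
  rw [smul_dotProduct_mulVec_smul, inv_pow, Real.sq_sqrt hq.le, inv_mul_cancel₀ hq.ne']

lemma center_eq_of_ellipsoid_eq {μ₁ μ₂ : n → ℝ} {A₁ A₂ : Matrix n n ℝ} (hA₁ : A₁.PosDef)
    (hA₂ : A₂.PosDef) (h : ellipsoid μ₁ A₁ = ellipsoid μ₂ A₂) : μ₁ = μ₂ := by
  set c := μ₁ - μ₂
  by_contra hμ
  have hc : c ≠ 0 := sub_ne_zero.2 hμ
  obtain ⟨s, hs, hsc⟩ := hA₁.exists_smul_dotProduct_mulVec_smul_eq_one hc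
  have hmem : ∀ t : ℝ, t ^ 2 = s ^ 2 → (1 + t) ^ 2 * (c ⬝ᵥ (A₂ *ᵥ c)) = 1 := fun t ht => by
    have hmem₁ : μ₁ + t • c ∈ ellipsoid μ₁ A₁ := by
      rw [mem_ellipsoid, add_sub_cancel_left, smul_dotProduct_mulVec_smul, ht,
        ← smul_dotProduct_mulVec_smul, hsc]
    have hdiff : μ₁ + t • c - μ₂ = (1 + t) • c := by simp only [c, add_smul, one_smul]; abel
    rwa [h, mem_ellipsoid, hdiff, smul_dotProduct_mulVec_smul] at hmem₁
  have hq : 0 < c ⬝ᵥ (A₂ *ᵥ c) := hA₂.dotProduct_mulVec_pos hc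
  have hsq : (1 + s) ^ 2 * (c ⬝ᵥ (A₂ *ᵥ c)) = (1 + -s) ^ 2 * (c ⬝ᵥ (A₂ *ᵥ c)) :=
    (hmem s rfl).trans (hmem (-s) (neg_sq s)).symm
  exact hs (by nlinarith)

lemma matrix_eq_of_ellipsoid_eq {μ : n → ℝ} {A₁ A₂ : Matrix n n ℝ} (hA₁ : A₁.PosDef)
    (hA₂ : A₂.PosDef) (h : ellipsoid μ A₁ = ellipsoid μ A₂) : A₁ = A₂ := by
  refine (isHermitian_iff_isSymm.1 hA₁.isHermitian).eq_of_dotProduct_mulVec_self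
    (isHermitian_iff_isSymm.1 hA₂.isHermitian) fun v => ?_
  rcases eq_or_ne v 0 with rfl | hv
  · simp
  obtain ⟨s, hs, hsv⟩ := hA₁.exists_smul_dotProduct_mulVec_smul_eq_one hv
  have hmem : μ + s • v ∈ ellipsoid μ A₁ := by rwa [mem_ellipsoid, add_sub_cancel_left]
  rw [h, mem_ellipsoid, add_sub_cancel_left] at hmem
  rw [smul_dotProduct_mulVec_smul] at hsv hmem
  exact mul_left_cancel₀ (pow_ne_zero 2 hs) (hsv.trans hmem.symm)

lemma ellipsoid_eq_iff {μ₁ μ₂ : n → ℝ} {A₁ A₂ : Matrix n n ℝ} (hA₁ : A₁.PosDef)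
    (hA₂ : A₂.PosDef) : ellipsoid μ₁ A₁ = ellipsoid μ₂ A₂ ↔ μ₁ = μ₂ ∧ A₁ = A₂ := by
  refine ⟨fun h => ?_, fun ⟨hμ, hA⟩ => hμ ▸ hA ▸ rfl⟩
  obtain rfl := center_eq_of_ellipsoid_eq hA₁ hA₂ h
  exact ⟨rfl, matrix_eq_of_ellipsoid_eq hA₁ hA₂ h⟩

end Ellipsoid

lemma isoSurf_eq_iff {μ₁ μ₂ : Fin 3 → ℝ} {S₁ S₂ : Matrix (Fin 3) (Fin 3) ℝ} (h₁ : S₁.PosDef)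
    (h₂ : S₂.PosDef) : isoSurf μ₁ S₁ = isoSurf μ₂ S₂ ↔ μ₁ = μ₂ ∧ S₁⁻¹ = S₂⁻¹ :=
  ellipsoid_eq_iff h₁.inv h₂.inv

lemma isoSurf_eq_of_gdens_eq {μ₁ μ₂ : Fin 3 → ℝ} {S₁ S₂ : Matrix (Fin 3) (Fin 3) ℝ}
    (h : ∀ x, gdens μ₁ S₁ x = gdens μ₂ S₂ x) : isoSurf μ₁ S₁ = isoSurf μ₂ S₂ := by
  have hmahal : mahal μ₁ S₁ = mahal μ₂ S₂ := funext fun x => by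
    simpa using Real.exp_injective (h x)
  rw [isoSurf, isoSurf, hmahal]

lemma sub_ne_zero_of_mem_isoSurf {μ x : Fin 3 → ℝ} {S : Matrix (Fin 3) (Fin 3) ℝ}
    (hx : x ∈ isoSurf μ S) : x - μ ≠ 0 := by
  rintro hxμ
  simp [isoSurf, mahal, hxμ] at hx

lemma dirFrom_dotProduct_self {μ x : Fin 3 → ℝ} (hx : x - μ ≠ 0) :
    dirFrom μ x ⬝ᵥ dirFrom μ x = 1 := by
  have hq : 0 < (x - μ) ⬝ᵥ (x - μ) :=
    (dotProduct_self_star_nonneg _).lt_of_ne' (dotProduct_self_eq_zero.not.2 hx)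
  rw [dirFrom, smul_dotProduct, dotProduct_smul, smul_eq_mul, smul_eq_mul, ← mul_assoc, ← sq,
    inv_pow, Real.sq_sqrt hq.le, inv_mul_cancel₀ hq.ne']

theorem stmt_9_general (μ₁ μ₂ : Fin 3 → ℝ) (S₁ S₂ : Matrix (Fin 3) (Fin 3) ℝ)
    (h₁ : S₁.PosDef) (h₂ : S₂.PosDef)
    (c₁ c₂ : (Fin 3 → ℝ) → (Fin 3 → ℝ)) :
    (((∀ x, gdens μ₁ S₁ x = gdens μ₂ S₂ x) ∧
        (∀ d : Fin 3 → ℝ, d ⬝ᵥ d = 1 → c₁ d = c₂ d)) →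
      (isoSurf μ₁ S₁ = isoSurf μ₂ S₂ ∧
        ∀ x ∈ isoSurf μ₁ S₁, sfField c₁ μ₁ x = sfField c₂ μ₂ x)) ∧
    (((isoSurf μ₁ S₁ = isoSurf μ₂ S₂) ∧
        (∀ x ∈ isoSurf μ₁ S₁, sfField c₁ μ₁ x = sfField c₂ μ₂ x)) →
      ((∀ x, gdens μ₁ S₁ x = gdens μ₂ S₂ x) ∧
        ∀ x ∈ isoSurf μ₁ S₁, c₁ (dirFrom μ₁ x) = c₂ (dirFrom μ₁ x))) := by
  constructor
  · rintro ⟨hρ, hc⟩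
    have hM := isoSurf_eq_of_gdens_eq hρ
    obtain ⟨rfl, -⟩ := (isoSurf_eq_iff h₁ h₂).1 hM
    exact ⟨hM, fun x hx => hc _ (dirFrom_dotProduct_self (sub_ne_zero_of_mem_isoSurf hx))⟩
  · rintro ⟨hM, hF⟩
    obtain ⟨rfl, hS⟩ := (isoSurf_eq_iff h₁ h₂).1 hM
    exact ⟨fun x => by rw [gdens, gdens, mahal, mahal, hS], hF⟩

/-- Injectivity of the submanifold-field representation of SGRFs: if `ρ₁ = ρ₂` and
`c₁ = c₂` (on the sphere) then the representations `(M₁,F₁)` and `(M₂,F₂)` agree, and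
conversely if `(M₁,F₁) = (M₂,F₂)` then `ρ₁ = ρ₂` and `c₁ = c₂` on the directions
realized by `M₁`. -/
theorem stmt_9 (μ₁ μ₂ : Fin 3 → ℝ) (S₁ S₂ : Matrix (Fin 3) (Fin 3) ℝ)
    (h₁ : S₁.PosDef) (h₂ : S₂.PosDef)
    (c₁ c₂ : (Fin 3 → ℝ) → (Fin 3 → ℝ))
    (hc₁ : ∃ d : Fin 3 → ℝ, d ⬝ᵥ d = 1 ∧ c₁ d ≠ 0)
    (hc₂ : ∃ d : Fin 3 → ℝ, d ⬝ᵥ d = 1 ∧ c₂ d ≠ 0) :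
    (((∀ x, gdens μ₁ S₁ x = gdens μ₂ S₂ x) ∧
        (∀ d : Fin 3 → ℝ, d ⬝ᵥ d = 1 → c₁ d = c₂ d)) →
      (isoSurf μ₁ S₁ = isoSurf μ₂ S₂ ∧
        ∀ x ∈ isoSurf μ₁ S₁, sfField c₁ μ₁ x = sfField c₂ μ₂ x)) ∧
    (((isoSurf μ₁ S₁ = isoSurf μ₂ S₂) ∧
        (∀ x ∈ isoSurf μ₁ S₁, sfField c₁ μ₁ x = sfField c₂ μ₂ x)) →
      ((∀ x, gdens μ₁ S₁ x = gdens μ₂ S₂ x) ∧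
        ∀ x ∈ isoSurf μ₁ S₁, c₁ (dirFrom μ₁ x) = c₂ (dirFrom μ₁ x))) :=
  stmt_9_general μ₁ μ₂ S₁ S₂ h₁ h₂ c₁ c₂
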